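/- Under condition ∫_ζ^{t₀}(r(ξ-ζ)+d(ξ-ζ))dξ ≤ 1 for all 0 ≤ ζ ≤ t₀, if I(t₀) = ∫₀^{t₀} J(ζ)dζ - R(t₀) - D(t₀), where R(t₀) = ∫₀^{t₀}∫₀^t r(t-ζ)J(ζ)dζ dt and D(t₀) = ∫₀^{t₀}∫₀^t d(t-ζ)J(ζ)dζ dt, with J, r, d continuous and nonnegative, then I(t₀) ≥ 0. -/
import Mathlib

open MeasureTheory Set

/-- Fubini swap on the triangle `0 ≤ ζ ≤ t ≤ t₀`. -/
lemma triangle_swap (f J : ℝ → ℝ) (t₀ : ℝ) (ht₀ : 0 ≤ t₀)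
    (hf : Continuous f) (hJ : Continuous J) :
    (∫ t in (0:ℝ)..t₀, ∫ ζ in (0:ℝ)..t, f (t - ζ) * J ζ)
      = ∫ ζ in (0:ℝ)..t₀, (∫ t in ζ..t₀, f (t - ζ)) * J ζ := by
  set μ : Measure ℝ := volume.restrict (Icc 0 t₀) with hμ
  set g : ℝ × ℝ → ℝ := fun p => f (p.1 - p.2) * J p.2 with hg
  have hgc : Continuous g := (hf.comp (continuous_fst.sub continuous_snd)).mul (hJ.comp continuous_snd)
  set S : Set (ℝ × ℝ) := {p : ℝ × ℝ | p.2 ≤ p.1} with hS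
  have hSm : MeasurableSet S := measurableSet_le measurable_snd measurable_fst
  set K : ℝ × ℝ → ℝ := S.indicator g with hK
  -- integrability of K on the product
  have hprod : μ.prod μ = (volume.prod volume).restrict (Icc 0 t₀ ×ˢ Icc 0 t₀) := by
    rw [hμ, Measure.prod_restrict]
  obtain ⟨M, hM⟩ := (isCompact_Icc.prod isCompact_Icc : IsCompact (Icc (0:ℝ) t₀ ×ˢ Icc 0 t₀)).exists_bound_of_continuousOn hgc.continuousOn
  have hKint : Integrable K (μ.prod μ) := by
    refine Integrable.mono' (integrable_const M) (hgc.aestronglyMeasurable.indicator hSm) ?_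
    rw [hprod]
    filter_upwards [ae_restrict_mem ((measurableSet_Icc.prod measurableSet_Icc))] with p hp
    exact le_trans (norm_indicator_le_norm_self g p) (hM p hp)
  have swap : (∫ t, ∫ ζ, K (t, ζ) ∂μ ∂μ) = ∫ ζ, ∫ t, K (t, ζ) ∂μ ∂μ :=
    integral_integral_swap (f := fun t ζ => K (t, ζ)) hKint
  -- LHS identification
  have lhs : (∫ t in (0:ℝ)..t₀, ∫ ζ in (0:ℝ)..t, f (t - ζ) * J ζ)
      = ∫ t, ∫ ζ, K (t, ζ) ∂μ ∂μ := by
    rw [hμ, intervalIntegral.integral_of_le ht₀, ← integral_Icc_eq_integral_Ioc]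
    refine setIntegral_congr_fun measurableSet_Icc (fun t ht => ?_)
    have h1 : (fun ζ => K (t, ζ)) = (Iic t).indicator (fun ζ => f (t - ζ) * J ζ) := by
      funext ζ
      by_cases h : ζ ≤ t
      · rw [hK, indicator_of_mem (by exact h : (t, ζ) ∈ S), indicator_of_mem (mem_Iic.2 h)]
      · rw [hK, indicator_of_notMem (by exact h : (t, ζ) ∉ S),
          indicator_of_notMem (fun hc => h (mem_Iic.1 hc))]
    rw [h1, integral_indicator measurableSet_Iic, Measure.restrict_restrict measurableSet_Iic]
    have h2 : Iic t ∩ Icc 0 t₀ = Icc 0 t := by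
      ext ζ
      simp only [mem_inter_iff, mem_Iic, mem_Icc]
      exact ⟨fun ⟨h1, h2, _⟩ => ⟨h2, h1⟩, fun ⟨h1, h2⟩ => ⟨h2, h1, h2.trans ht.2⟩⟩
    rw [h2, intervalIntegral.integral_of_le ht.1, ← integral_Icc_eq_integral_Ioc]
  -- RHS identification
  have rhs : (∫ ζ in (0:ℝ)..t₀, (∫ t in ζ..t₀, f (t - ζ)) * J ζ)
      = ∫ ζ, ∫ t, K (t, ζ) ∂μ ∂μ := by
    rw [hμ, intervalIntegral.integral_of_le ht₀, ← integral_Icc_eq_integral_Ioc]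
    refine setIntegral_congr_fun measurableSet_Icc (fun ζ hζ => ?_)
    have h1 : (fun t => K (t, ζ)) = (Ici ζ).indicator (fun t => f (t - ζ) * J ζ) := by
      funext t
      by_cases h : ζ ≤ t
      · rw [hK, indicator_of_mem (by exact h : (t, ζ) ∈ S), indicator_of_mem (mem_Ici.2 h)]
      · rw [hK, indicator_of_notMem (by exact h : (t, ζ) ∉ S),
          indicator_of_notMem (fun hc => h (mem_Ici.1 hc))]
    rw [h1, integral_indicator measurableSet_Ici, Measure.restrict_restrict measurableSet_Ici]
    have h2 : Ici ζ ∩ Icc 0 t₀ = Icc ζ t₀ := by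
      ext t
      simp only [mem_inter_iff, mem_Ici, mem_Icc]
      exact ⟨fun ⟨h1, _, h3⟩ => ⟨h1, h3⟩, fun ⟨h1, h3⟩ => ⟨h1, hζ.1.trans h1, h3⟩⟩
    rw [h2, intervalIntegral.integral_of_le hζ.2, ← integral_Icc_eq_integral_Ioc,
      ]
    exact (integral_mul_const (J ζ) fun t => f (t - ζ)).symm
  rw [lhs, rhs, swap]

theorem infected_nonneg (J r d : ℝ → ℝ) (t₀ I R D : ℝ) (ht₀ : 0 ≤ t₀)
    (hJ : Continuous J) (hJpos : ∀ ζ : ℝ, 0 ≤ ζ → 0 ≤ J ζ)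
    (hr : Continuous r) (hd : Continuous d)
    (hrpos : ∀ ξ : ℝ, 0 ≤ ξ → 0 ≤ r ξ) (hdpos : ∀ ξ : ℝ, 0 ≤ ξ → 0 ≤ d ξ)
    (hcond : ∀ ζ ∈ Set.Icc (0 : ℝ) t₀, (∫ ξ in ζ..t₀, (r (ξ - ζ) + d (ξ - ζ))) ≤ 1)
    (hR : R = ∫ t in (0 : ℝ)..t₀, ∫ ζ in (0 : ℝ)..t, r (t - ζ) * J ζ)
    (hD : D = ∫ t in (0 : ℝ)..t₀, ∫ ζ in (0 : ℝ)..t, d (t - ζ) * J ζ)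
    (hI : I = (∫ ζ in (0 : ℝ)..t₀, J ζ) - R - D) :
    0 ≤ I := by
  -- rewrite R and D via the triangle swap
  have hR' : R = ∫ ζ in (0:ℝ)..t₀, (∫ t in ζ..t₀, r (t - ζ)) * J ζ := by
    rw [hR, triangle_swap r J t₀ ht₀ hr hJ]
  have hD' : D = ∫ ζ in (0:ℝ)..t₀, (∫ t in ζ..t₀, d (t - ζ)) * J ζ := by
    rw [hD, triangle_swap d J t₀ ht₀ hd hJ]
  -- continuity of the coefficients
  have hcont : ∀ f : ℝ → ℝ, Continuous f →
      Continuous fun ζ => (∫ t in ζ..t₀, f (t - ζ)) := by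
    intro f hf
    have h : (fun ζ => ∫ t in ζ..t₀, f (t - ζ)) = fun ζ => ∫ u in (0:ℝ)..(t₀ - ζ), f u := by
      funext ζ
      rw [intervalIntegral.integral_comp_sub_right _ ζ, sub_self]
    rw [h]
    exact (intervalIntegral.continuous_primitive (fun a b => hf.intervalIntegrable a b) 0).comp
      (continuous_const.sub continuous_id)
  have hcr := hcont r hr
  have hcd := hcont d hd
  have hint1 : IntervalIntegrable (fun ζ => (∫ t in ζ..t₀, r (t - ζ)) * J ζ) volume 0 t₀ :=
    (hcr.mul hJ).intervalIntegrable 0 t₀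
  have hint2 : IntervalIntegrable (fun ζ => (∫ t in ζ..t₀, d (t - ζ)) * J ζ) volume 0 t₀ :=
    (hcd.mul hJ).intervalIntegrable 0 t₀
  have hsum : R + D = ∫ ζ in (0:ℝ)..t₀,
      ((∫ t in ζ..t₀, r (t - ζ)) * J ζ + (∫ t in ζ..t₀, d (t - ζ)) * J ζ) := by
    rw [hR', hD', intervalIntegral.integral_add hint1 hint2]
  have hle : (∫ ζ in (0:ℝ)..t₀,
      ((∫ t in ζ..t₀, r (t - ζ)) * J ζ + (∫ t in ζ..t₀, d (t - ζ)) * J ζ))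
      ≤ ∫ ζ in (0:ℝ)..t₀, J ζ := by
    refine intervalIntegral.integral_mono_on ht₀ (hint1.add hint2)
      (hJ.intervalIntegrable 0 t₀) (fun ζ hζ => ?_)
    have hc := hcond ζ hζ
    have hadd : (∫ ξ in ζ..t₀, (r (ξ - ζ) + d (ξ - ζ)))
        = (∫ t in ζ..t₀, r (t - ζ)) + ∫ t in ζ..t₀, d (t - ζ) := by
      exact intervalIntegral.integral_add
        ((hr.comp (continuous_id.sub continuous_const)).intervalIntegrable ζ t₀)
        ((hd.comp (continuous_id.sub continuous_const)).intervalIntegrable ζ t₀)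
    rw [hadd] at hc
    calc (∫ t in ζ..t₀, r (t - ζ)) * J ζ + (∫ t in ζ..t₀, d (t - ζ)) * J ζ
        = ((∫ t in ζ..t₀, r (t - ζ)) + ∫ t in ζ..t₀, d (t - ζ)) * J ζ := by ring
      _ ≤ J ζ := mul_le_of_le_one_left (hJpos ζ hζ.1) hc
  rw [hI]
  linarith [hsum ▸ hle]
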